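/- arXiv:1708.00728 — 2 statements merged into one kernel-verified Lean document; each statement's English description precedes it below -/
import Mathlib

section
/- Let B ∈ ℝ^{n×m} be the oriented incidence matrix of an undirected graph on n nodes, let L ∈ ℝ^{n×n} satisfy L·1_n = 0, and let q̄ ∈ ℝ. Then the curves x̃(t) = sin(t)·1_n, μ̃(t) = 0 ∈ ℝ^m, θ̃(t) = cos(t)·1_n form a solution of the linear system ẋ̃ = −B μ̃ + θ̃, μ̇̃ = Bᵀ x̃, θ̇̃ = −x̃ − q̄² L θ̃, with initial conditions x̃(0) = 0, μ̃(0) = 0, θ̃(0) = 1_n; in particular this solution is periodic and does not converge to an equilibrium. -/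
open Matrix BigOperators Filter Topology MeasureTheory

/-- An undirected graph on `Fin n` with `m` edges, each edge given an arbitrary
orientation: edge `k` goes from its positive end `pos k` to its negative end `neg k`. -/
structure OrientedGraph (n m : ℕ) where
  pos : Fin m → Fin n
  neg : Fin m → Fin n
  ne_ends : ∀ k, pos k ≠ neg k

namespace OrientedGraph

variable {n m : ℕ}

/-- The oriented incidence matrix `B ∈ ℝ^{n×m}`. -/
def inc (G : OrientedGraph n m) : Matrix (Fin n) (Fin m) ℝ :=
  Matrix.of fun i k => if i = G.pos k then (1 : ℝ) else if i = G.neg k then -1 else 0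

/-- Adjacency in the underlying undirected graph. -/
def Adj (G : OrientedGraph n m) (i j : Fin n) : Prop :=
  ∃ k, (G.pos k = i ∧ G.neg k = j) ∨ (G.pos k = j ∧ G.neg k = i)

/-- Connectedness of the underlying undirected graph. -/
def Connected (G : OrientedGraph n m) : Prop :=
  ∀ i j : Fin n, Relation.ReflTransGen G.Adj i j

end OrientedGraph

/-- The matrix `E = [I_p ; 0_{(n-p)×p}]` selecting the first `p` nodes. -/
def selE (n p : ℕ) : Matrix (Fin n) (Fin p) ℝ :=
  Matrix.of fun i j => if (i : ℕ) = (j : ℕ) then 1 else 0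

/-- Componentwise application of a family of scalar functions. -/
def cw {k : ℕ} (f : Fin k → ℝ → ℝ) (x : Fin k → ℝ) : Fin k → ℝ :=
  fun i => f i (x i)

/-- `λ* = (1ₙᵀ d + 1ₚᵀ Q⁻¹ r)/(1ₚᵀ Q⁻¹ 1ₚ)` for `Q = diag q`. -/
noncomputable def lamStar {n p : ℕ} (q r : Fin p → ℝ) (d : Fin n → ℝ) : ℝ :=
  ((∑ i, d i) + ∑ i, r i / q i) / (∑ i, (q i)⁻¹)

/-- The optimal input `ū = Q⁻¹(λ*·1ₚ − r)`. -/
noncomputable def uOpt {n p : ℕ} (q r : Fin p → ℝ) (d : Fin n → ℝ) : Fin p → ℝ :=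
  fun i => (lamStar q r d - r i) / q i

/-- The cost `C(u) = ½ uᵀQu + rᵀu + s` for `Q = diag q`. -/
noncomputable def cost {p : ℕ} (q r : Fin p → ℝ) (s : ℝ) (u : Fin p → ℝ) : ℝ :=
  (1 / 2) * (∑ i, q i * u i ^ 2) + (∑ i, r i * u i) + s

/-- `L` is the Laplacian matrix of a balanced, strongly connected weighted digraph:
nonpositive off-diagonal entries, zero row sums, zero column sums, and the digraph
whose arcs are the pairs with `L i j < 0` is strongly connected. -/
structure IsBalancedStronglyConnectedLaplacian {p : ℕ} (L : Matrix (Fin p) (Fin p) ℝ) : Prop where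
  offdiag_nonpos : ∀ i j, i ≠ j → L i j ≤ 0
  rowsum : L.mulVec (fun _ => 1) = 0
  colsum : Matrix.vecMul (fun _ => 1) L = 0
  sconn : ∀ i j : Fin p, Relation.ReflTransGen (fun a b => a ≠ b ∧ L a b < 0) i j

/-! The constant vectors are annihilated by `Bᵀ` and by `L`, so along `sin t • 1`, `0`, `cos t • 1`
the system collapses to the harmonic oscillator `ẋ = θ`, `θ̇ = -x`. A nonconstant periodic function
has no limit at infinity, which rules out convergence. -/

theorem Matrix.mulVec_const_eq_zero {R m n : Type*} [CommSemiring R] [Fintype n]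
    {A : Matrix m n R} (hA : A *ᵥ (fun _ => 1) = 0) (c : R) : A *ᵥ (fun _ => c) = 0 := by
  have hc : (fun _ : n => c) = c • fun _ => 1 := by ext; simp
  rw [hc, mulVec_smul, hA, smul_zero]

namespace OrientedGraph

variable {n m : ℕ} (G : OrientedGraph n m)

theorem inc_apply_eq_sub (i : Fin n) (k : Fin m) :
    G.inc i k = (if i = G.pos k then 1 else 0) - (if i = G.neg k then 1 else 0) := by
  have := G.ne_ends k
  simp only [inc, of_apply]
  split_ifs <;> simp_all

theorem inc_transpose_mulVec_one : G.incᵀ *ᵥ (fun _ => 1) = 0 := by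
  ext k
  simp [mulVec, dotProduct, inc_apply_eq_sub, Finset.sum_sub_distrib]

end OrientedGraph

theorem Function.Periodic.eq_of_tendsto_atTop {α : Type*} [TopologicalSpace α] [T2Space α]
    {f : ℝ → α} {c : ℝ} (hf : Function.Periodic f c) (hc : 0 < c) {y : α}
    (hy : Tendsto f atTop (𝓝 y)) (x : ℝ) : f x = y := by
  have hshift : Tendsto (fun k : ℕ => x + k * c) atTop atTop :=
    tendsto_atTop_add_const_left _ _ (tendsto_natCast_atTop_atTop.atTop_mul_const hc)
  refine tendsto_nhds_unique ?_ (hy.comp hshift)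
  simpa only [Function.comp_def, hf.nat_mul _ x] using tendsto_const_nhds

theorem Real.not_tendsto_sin_atTop (y : ℝ) : ¬ Tendsto Real.sin atTop (𝓝 y) := fun hy => by
  have hconst := Real.sin_periodic.eq_of_tendsto_atTop Real.two_pi_pos hy
  simpa using (hconst (Real.pi / 2)).trans (hconst 0).symm

/-- The curves `x̃(t) = sin t·1`, `μ̃(t) = 0`, `θ̃(t) = cos t·1` solve
`ẋ̃ = −Bμ̃ + θ̃`, `μ̇̃ = Bᵀx̃`, `θ̇̃ = −x̃ − q̄²Lθ̃` with `x̃(0)=0`, `μ̃(0)=0`, `θ̃(0)=1`;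
this solution is periodic and does not converge. -/
theorem oscillating_solution {n m : ℕ} (hn : 0 < n) (G : OrientedGraph n m)
    (L : Matrix (Fin n) (Fin n) ℝ) (hL : L.mulVec (fun _ => 1) = 0) (qb : ℝ) :
    let xt : ℝ → Fin n → ℝ := fun t _ => Real.sin t
    let mt : ℝ → Fin m → ℝ := fun _ _ => 0
    let tht : ℝ → Fin n → ℝ := fun t _ => Real.cos t
    (∀ t i, HasDerivAt (fun s => xt s i) ((-(G.inc.mulVec (mt t)) + tht t) i) t) ∧
    (∀ t k, HasDerivAt (fun s => mt s k) (((G.inc)ᵀ.mulVec (xt t)) k) t) ∧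
    (∀ t i, HasDerivAt (fun s => tht s i)
      ((-(xt t) - qb ^ 2 • L.mulVec (tht t)) i) t) ∧
    xt 0 = 0 ∧ mt 0 = 0 ∧ tht 0 = (fun _ => 1) ∧
    Function.Periodic xt (2 * Real.pi) ∧ Function.Periodic mt (2 * Real.pi) ∧
    Function.Periodic tht (2 * Real.pi) ∧
    ¬ (∃ (xs : Fin n → ℝ) (ms : Fin m → ℝ) (ths : Fin n → ℝ),
        Tendsto xt atTop (𝓝 xs) ∧ Tendsto mt atTop (𝓝 ms) ∧
        Tendsto tht atTop (𝓝 ths)) := by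
  intro xt mt tht
  have hBμ : ∀ t, G.inc *ᵥ mt t = 0 := fun t => mulVec_zero _
  have hBx : ∀ t, G.incᵀ *ᵥ xt t = 0 := fun t => mulVec_const_eq_zero G.inc_transpose_mulVec_one _
  have hLθ : ∀ t, L *ᵥ tht t = 0 := fun t => mulVec_const_eq_zero hL _
  refine ⟨fun t _ => ?_, fun t k => ?_, fun t _ => ?_, by ext; simp [xt], rfl, by ext; simp [tht],
    Real.sin_periodic.comp (fun y _ => y), fun _ => rfl, Real.cos_periodic.comp (fun y _ => y), ?_⟩
  · simpa [hBμ t, xt, tht] using Real.hasDerivAt_sin t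
  · simpa [hBx t] using hasDerivAt_const t (0 : ℝ)
  · simpa [hLθ t, xt] using Real.hasDerivAt_cos t
  · rintro ⟨xs, -, -, hx, -, -⟩
    exact Real.not_tendsto_sin_atTop _ (((continuous_apply ⟨0, hn⟩).tendsto _).comp hx)
end

section
/- Let G be a connected undirected graph with n nodes and incidence matrix B ∈ ℝ^{n×m}, E = [I_p;0] with p ≥ 1, Q ∈ ℝ^{p×p} diagonal with strictly positive diagonal entries, r ∈ ℝ^p, s ∈ ℝ, d ∈ ℝ^n, and let Ψ(x̄) = −B_c γ(B_cᵀ h(x̄)) − E_c η(E_cᵀ h(x̄)) be fixed (x̄ a given point), where B_c is an incidence matrix of a graph on the same node set. Consider minimizing C(u) = ½uᵀQu + rᵀu + s over all u ∈ ℝ^p for which there exists λ ∈ ℝ^m with 0 = Ψ(x̄) − Bλ + Eu − d. Then the unique minimizer is û = Q⁻¹(λ̂·1_p − r), where λ̂ = (1_nᵀ d̂ + 1_pᵀQ⁻¹r)/(1_pᵀQ⁻¹1_p) and d̂ = d + E_c η(E_cᵀ h(x̄)). -/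
open Matrix BigOperators Filter Topology MeasureTheory

/-- The matrix `E_c ∈ ℝ^{n×p_c}` with exactly one entry `1` per column, indicating at
which node each state-dependent inflow/outflow is located. -/
def locMatrix (n : ℕ) {pc : ℕ} (loc : Fin pc → Fin n) : Matrix (Fin n) (Fin pc) ℝ :=
  Matrix.of fun i k => if i = loc k then 1 else 0

/-!
Summing the balance equation `0 = Ψ(x̄) − Bλ + Eu − d` over all nodes kills `Bλ` and the
`B_c`-part of `Ψ(x̄)` (incidence columns sum to zero), so a feasible `u` satisfies
`1ᵀu = 1ᵀd̂`; conversely, on a connected graph every zero-sum vector is a flow `Bλ`, so this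
single linear constraint is the whole feasible set. Minimizing the strictly convex separable
cost on that hyperplane is solved by the Lagrange condition `Qû + r = λ̂·1`, and for feasible
`u` one has `C(u) = C(û) + ½ (u − û)ᵀQ(u − û)`.
-/

theorem sum_mulVec_of_forall_sum_col_eq {ι κ R : Type*} [Fintype ι] [Fintype κ] [Semiring R]
    (M : Matrix ι κ R) {c : R} (hM : ∀ j, ∑ i, M i j = c) (w : κ → R) :
    ∑ i, (M *ᵥ w) i = c * ∑ j, w j := by
  simp only [mulVec, dotProduct, Finset.mul_sum]
  rw [Finset.sum_comm]
  exact Finset.sum_congr rfl fun j _ => by rw [← Finset.sum_mul, hM]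

namespace OrientedGraph

variable {n m : ℕ} (G : OrientedGraph n m)

theorem col_inc (k : Fin m) :
    G.inc.col k = Pi.single (G.pos k) 1 - Pi.single (G.neg k) 1 := by
  ext i
  have hne := G.ne_ends k
  by_cases hp : i = G.pos k
  · subst hp; simp [inc, hne]
  · by_cases hn : i = G.neg k
    · subst hn; simp [inc, hne.symm]
    · simp [inc, hp, hn]

theorem sum_inc_apply (k : Fin m) : ∑ i, G.inc i k = 0 := by
  simpa [Pi.single_apply] using congrArg (fun v => ∑ i, v i) (G.col_inc k)

theorem sum_inc_mulVec (w : Fin m → ℝ) : ∑ i, (G.inc *ᵥ w) i = 0 := by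
  simp [sum_mulVec_of_forall_sum_col_eq G.inc G.sum_inc_apply]

theorem single_sub_single_mem_range {i j : Fin n} (hij : Relation.ReflTransGen G.Adj i j) :
    (Pi.single i 1 - Pi.single j 1 : Fin n → ℝ) ∈ LinearMap.range G.inc.mulVecLin := by
  induction hij with
  | refl => simp
  | @tail b c _ hbc ih =>
    have hedge :
        (Pi.single b 1 - Pi.single c 1 : Fin n → ℝ) ∈ LinearMap.range G.inc.mulVecLin := by
      obtain ⟨k, ⟨rfl, rfl⟩ | ⟨rfl, rfl⟩⟩ := hbc
      · exact ⟨Pi.single k 1, by rw [mulVecLin_apply, mulVec_single_one, col_inc]⟩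
      · exact ⟨-Pi.single k 1, by
          rw [map_neg, mulVecLin_apply, mulVec_single_one, col_inc, neg_sub]⟩
    simpa using Submodule.add_mem _ ih hedge

theorem Connected.exists_inc_mulVec_eq_iff {G : OrientedGraph n m} (hG : G.Connected)
    (v : Fin n → ℝ) : (∃ lam, G.inc *ᵥ lam = v) ↔ ∑ i, v i = 0 := by
  refine ⟨fun ⟨lam, hlam⟩ => hlam ▸ G.sum_inc_mulVec lam, fun hv => ?_⟩
  rcases isEmpty_or_nonempty (Fin n) with _ | ⟨⟨i₀⟩⟩
  · exact ⟨0, Subsingleton.elim _ _⟩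
  have hv' : v = ∑ i, v i • (Pi.single i 1 - Pi.single i₀ 1 : Fin n → ℝ) := by
    ext j
    simp [Pi.single_apply, mul_sub, Finset.sum_sub_distrib, hv]
  exact hv' ▸ Submodule.sum_mem _ fun i _ =>
    Submodule.smul_mem _ _ (G.single_sub_single_mem_range (hG i i₀))

end OrientedGraph

theorem sum_selE_apply {n p : ℕ} (hpn : p ≤ n) (j : Fin p) : ∑ i, selE n p i j = 1 := by
  have hcol : ∀ i : Fin n, (i : ℕ) = j ↔ i = Fin.castLE hpn j := fun i => by
    simp [Fin.ext_iff]
  simp [selE, hcol]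

theorem exists_balance_iff {n m p : ℕ} (hpn : p ≤ n) {G : OrientedGraph n m}
    (hG : G.Connected) (ψ d : Fin n → ℝ) (u : Fin p → ℝ) :
    (∃ lam, 0 = ψ - G.inc *ᵥ lam + selE n p *ᵥ u - d) ↔
      ∑ j, u j = ∑ i, d i - ∑ i, ψ i := by
  have hbal : ∀ lam, 0 = ψ - G.inc *ᵥ lam + selE n p *ᵥ u - d ↔
      G.inc *ᵥ lam = ψ + selE n p *ᵥ u - d := fun lam => by
    have hneg : G.inc *ᵥ lam - (ψ + selE n p *ᵥ u - d)
        = -(ψ - G.inc *ᵥ lam + selE n p *ᵥ u - d) := by abel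
    rw [← sub_eq_zero (a := G.inc *ᵥ lam), hneg, neg_eq_zero, eq_comm]
  simp_rw [hbal, hG.exists_inc_mulVec_eq_iff, Pi.sub_apply, Pi.add_apply,
    Finset.sum_sub_distrib, Finset.sum_add_distrib,
    sum_mulVec_of_forall_sum_col_eq _ (sum_selE_apply hpn), one_mul]
  constructor <;> intro h <;> linarith

theorem cost_eq_cost_add_of_stationary {p : ℕ} {q r : Fin p → ℝ} {lam : ℝ} (s : ℝ)
    {u v : Fin p → ℝ} (hv : ∀ i, q i * v i + r i = lam) (huv : ∑ i, u i = ∑ i, v i) :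
    cost q r s u = cost q r s v + 1 / 2 * ∑ i, q i * (u i - v i) ^ 2 := by
  have hsum : ∑ i, (r i + q i * v i) * (u i - v i) = 0 := by
    simp_rw [add_comm (r _), hv, ← Finset.mul_sum, Finset.sum_sub_distrib, huv, sub_self,
      mul_zero]
  have hexp : ∀ i, q i * (u i - v i) ^ 2 = q i * u i ^ 2 - q i * v i ^ 2
      - 2 * ((r i + q i * v i) * (u i - v i)) + 2 * (r i * u i - r i * v i) := fun i => by ring
  simp only [cost, hexp, Finset.sum_add_distrib, Finset.sum_sub_distrib, ← Finset.mul_sum, hsum]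
  ring

theorem cost_lt_of_stationary {p : ℕ} {q r : Fin p → ℝ} (hq : ∀ i, 0 < q i) {lam : ℝ}
    (s : ℝ) {u v : Fin p → ℝ} (hv : ∀ i, q i * v i + r i = lam)
    (huv : ∑ i, u i = ∑ i, v i) (hne : u ≠ v) : cost q r s v < cost q r s u := by
  obtain ⟨i, hi⟩ := Function.ne_iff.mp hne
  have hpos : 0 < ∑ i, q i * (u i - v i) ^ 2 :=
    Finset.sum_pos' (fun j _ => mul_nonneg (hq j).le (sq_nonneg _))
      ⟨i, Finset.mem_univ _, mul_pos (hq i) (sq_pos_of_ne_zero (sub_ne_zero.mpr hi))⟩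
  rw [cost_eq_cost_add_of_stationary s hv huv]
  linarith

theorem uOpt_stationary {n p : ℕ} {q : Fin p → ℝ} (hq : ∀ i, q i ≠ 0) (r : Fin p → ℝ)
    (d : Fin n → ℝ) (i : Fin p) : q i * uOpt q r d i + r i = lamStar q r d := by
  rw [uOpt, mul_div_cancel₀ _ (hq i), sub_add_cancel]

theorem sum_uOpt {n p : ℕ} {q : Fin p → ℝ} (hq : ∑ i, (q i)⁻¹ ≠ 0) (r : Fin p → ℝ)
    (d : Fin n → ℝ) : ∑ i, uOpt q r d i = ∑ i, d i := by
  have hsplit : ∑ i, uOpt q r d i = lamStar q r d * ∑ i, (q i)⁻¹ - ∑ i, r i / q i := by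
    simp only [uOpt, div_eq_mul_inv, sub_mul, Finset.sum_sub_distrib, Finset.mul_sum]
  rw [hsplit, lamStar, div_mul_cancel₀ _ hq, add_sub_cancel_right]

theorem uOpt_compartmental_unique_minimizer_general {n m p l pc : ℕ} (hp : 0 < p) (hpn : p ≤ n)
    (G : OrientedGraph n m) (hG : G.Connected) (Gc : OrientedGraph n l)
    (loc : Fin pc → Fin n)
    (γ : Fin l → ℝ → ℝ)
    (η : Fin pc → ℝ → ℝ)
    (h : Fin n → ℝ → ℝ)
    (q r : Fin p → ℝ) (hq : ∀ i, 0 < q i) (s : ℝ) (d : Fin n → ℝ)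
    (xb : Fin n → ℝ) :
    -- with `Ψ(x̄)` and `d̂` as follows:
    ∀ Psixb dhat : Fin n → ℝ,
    Psixb = -(Gc.inc.mulVec (cw γ ((Gc.inc)ᵀ.mulVec (cw h xb)))) -
      (locMatrix n loc).mulVec (cw η ((locMatrix n loc)ᵀ.mulVec (cw h xb))) →
    dhat = d + (locMatrix n loc).mulVec (cw η ((locMatrix n loc)ᵀ.mulVec (cw h xb))) →
    (∃ lam : Fin m → ℝ,
      0 = Psixb - G.inc.mulVec lam + (selE n p).mulVec (uOpt q r dhat) - d) ∧
    ∀ u : Fin p → ℝ,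
      (∃ lam : Fin m → ℝ, 0 = Psixb - G.inc.mulVec lam + (selE n p).mulVec u - d) →
      u ≠ uOpt q r dhat → cost q r s (uOpt q r dhat) < cost q r s u := by
  intro Psixb dhat hPsi hdhat
  have hsum_dhat : ∑ i, dhat i = ∑ i, d i - ∑ i, Psixb i := by
    simp only [hPsi, hdhat, Pi.add_apply, Pi.sub_apply, Pi.neg_apply, Finset.sum_add_distrib,
      Finset.sum_sub_distrib, Finset.sum_neg_distrib, Gc.sum_inc_mulVec]
    ring
  have hq_inv : ∑ i, (q i)⁻¹ ≠ 0 :=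
    (Finset.sum_pos (fun i _ => inv_pos.mpr (hq i)) ⟨⟨0, hp⟩, Finset.mem_univ _⟩).ne'
  refine ⟨(exists_balance_iff hpn hG _ _ _).mpr (by rw [sum_uOpt hq_inv, hsum_dhat]),
    fun u hu hne =>
      cost_lt_of_stationary hq s (uOpt_stationary (fun i => (hq i).ne') r _) ?_ hne⟩
  rw [(exists_balance_iff hpn hG _ _ _).mp hu, sum_uOpt hq_inv, hsum_dhat]

/-- With the compartmental term `Ψ(x̄)` fixed, the unique minimizer
of `C(u)` subject to `0 = Ψ(x̄) − Bλ + Eu − d` is `û = Q⁻¹(λ̂·1ₚ − r)` with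
`λ̂ = (1ₙᵀd̂ + 1ₚᵀQ⁻¹r)/(1ₚᵀQ⁻¹1ₚ)` and `d̂ = d + E_c η(E_cᵀ h(x̄))`. -/
theorem uOpt_compartmental_unique_minimizer {n m p l pc : ℕ} (hp : 0 < p) (hpn : p ≤ n)
    (G : OrientedGraph n m) (hG : G.Connected) (Gc : OrientedGraph n l)
    (loc : Fin pc → Fin n)
    (γ : Fin l → ℝ → ℝ) (hγ : ∀ k, Monotone (γ k) ∧ ContDiff ℝ 1 (γ k))
    (η : Fin pc → ℝ → ℝ) (hη : ∀ i, Monotone (η i) ∧ ContDiff ℝ 1 (η i))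
    (h : Fin n → ℝ → ℝ) (hh : ∀ i, StrictMono (h i))
    (q r : Fin p → ℝ) (hq : ∀ i, 0 < q i) (s : ℝ) (d : Fin n → ℝ)
    (xb : Fin n → ℝ) :
    -- with `Ψ(x̄)` and `d̂` as follows:
    ∀ Psixb dhat : Fin n → ℝ,
    Psixb = -(Gc.inc.mulVec (cw γ ((Gc.inc)ᵀ.mulVec (cw h xb)))) -
      (locMatrix n loc).mulVec (cw η ((locMatrix n loc)ᵀ.mulVec (cw h xb))) →
    dhat = d + (locMatrix n loc).mulVec (cw η ((locMatrix n loc)ᵀ.mulVec (cw h xb))) →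
    (∃ lam : Fin m → ℝ,
      0 = Psixb - G.inc.mulVec lam + (selE n p).mulVec (uOpt q r dhat) - d) ∧
    ∀ u : Fin p → ℝ,
      (∃ lam : Fin m → ℝ, 0 = Psixb - G.inc.mulVec lam + (selE n p).mulVec u - d) →
      u ≠ uOpt q r dhat → cost q r s (uOpt q r dhat) < cost q r s u :=
  uOpt_compartmental_unique_minimizer_general hp hpn G hG Gc loc γ η h q r hq s d xb
end
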